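/- Let A be an anti-flexible algebra and E an anti-flexible algebra containing A as a linear subspace; let p: E→A be a linear projection with p(a) = a for all a in A and set V = ker(p). Suppose that V is a subalgebra of E and that p is an algebra homomorphism. Define x◁a := x·a, a▷x := a·x, θ(a,b) := a·b − p(a·b), and x·_V y := x·y (products taken in E), for a,b in A and x,y in V. Then these maps constitute a type (a1) extending datum (so conditions (A1)–(A6) hold), and the map φ: A #_θ V → E, φ(a,x) = a + x, is an isomorphism of anti-flexible algebras, where A #_θ V = A⊕V carries the multiplication (a,x)(b,y) = (ab, x·_V y + x◁b + a▷y + θ(a,b)). -/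
import Mathlib


open TensorProduct LinearMap

namespace AntiFlexible

section Basic

variable (K : Type*) [Field K] [CharZero K]
variable (M N P : Type*)
variable [AddCommGroup M] [Module K M] [AddCommGroup N] [Module K N] [AddCommGroup P] [Module K P]

/-- The flip map `τ : M ⊗ N → N ⊗ M`. -/
noncomputable def τ : M ⊗[K] N →ₗ[K] N ⊗[K] M := (TensorProduct.comm K M N).toLinearMap

/-- `τ₁₃ : (M ⊗ N) ⊗ P → (P ⊗ N) ⊗ M`, exchanging the outer tensor factors. -/
noncomputable def τ₁₃ : (M ⊗[K] N) ⊗[K] P →ₗ[K] (P ⊗[K] N) ⊗[K] M :=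
  (TensorProduct.assoc K P N M).symm.toLinearMap ∘ₗ
    (lTensor P (τ K M N)) ∘ₗ (TensorProduct.comm K (M ⊗[K] N) P).toLinearMap

/-- The reassociator `M ⊗ (N ⊗ P) → (M ⊗ N) ⊗ P`. -/
noncomputable def α : M ⊗[K] (N ⊗[K] P) →ₗ[K] (M ⊗[K] N) ⊗[K] P :=
  (TensorProduct.assoc K M N P).symm.toLinearMap

/-- The antisymmetrizer `id - τ` on `M ⊗ M`. -/
noncomputable def ω : M ⊗[K] M →ₗ[K] M ⊗[K] M := LinearMap.id - τ K M M

end Basic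

section Structures

variable {K : Type*} [Field K] [CharZero K]
variable {A H V : Type*}
variable [AddCommGroup A] [Module K A] [AddCommGroup H] [Module K H]
variable [AddCommGroup V] [Module K V]

/-- Anti-flexible algebra: `(ab)c - a(bc) = (cb)a - c(ba)`. -/
def IsAFAlgebra (m : A →ₗ[K] A →ₗ[K] A) : Prop :=
  ∀ a b c, m (m a b) c - m a (m b c) = m (m c b) a - m c (m b a)

/-- The coassociativity defect `(Δ ⊗ id)Δ - (id ⊗ Δ)Δ`, viewed in `(A ⊗ A) ⊗ A`. -/
noncomputable def coassocDefect (Δ : A →ₗ[K] A ⊗[K] A) : A →ₗ[K] (A ⊗[K] A) ⊗[K] A :=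
  (rTensor A Δ) ∘ₗ Δ - (α K A A A) ∘ₗ (lTensor A Δ) ∘ₗ Δ

/-- Anti-flexible coalgebra: the coassociativity defect is `τ₁₃`-invariant. -/
def IsAFCoalgebra (Δ : A →ₗ[K] A ⊗[K] A) : Prop :=
  ∀ a, coassocDefect Δ a = τ₁₃ K A A A (coassocDefect Δ a)

/-- Anti-flexible bialgebra. -/
def IsAFBialgebra (m : A →ₗ[K] A →ₗ[K] A) (Δ : A →ₗ[K] A ⊗[K] A) : Prop :=
  IsAFAlgebra m ∧ IsAFCoalgebra Δ ∧
  (∀ a b, Δ (m a b) + τ K A A (Δ (m b a)) =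
      rTensor A (m b) (τ K A A (Δ a)) + lTensor A (m.flip a) (τ K A A (Δ b))
      + rTensor A (m.flip b) (Δ a) + lTensor A (m a) (Δ b)) ∧
  (∀ a b, ω K A (lTensor A (m.flip b) (Δ a) - rTensor A (m b) (Δ a)
      - lTensor A (m.flip a) (Δ b) + rTensor A (m a) (Δ b)) = 0)

/-- `V` is a bimodule over the anti-flexible algebra `(H, m)` via `tr = ▷` and `tl = ◁`. -/
def IsAFBimodule (m : H →ₗ[K] H →ₗ[K] H)
    (tr : H →ₗ[K] V →ₗ[K] V) (tl : V →ₗ[K] H →ₗ[K] V) : Prop :=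
  (∀ x y v, tr (m x y) v - tr x (tr y v) = tl (tl v y) x - tl v (m y x)) ∧
  (∀ x y v, tl (tr x v) y - tr x (tl v y) = tl (tr y v) x - tr y (tl v x))

/-- `V` is a bicomodule over the anti-flexible coalgebra `(H, Δ)` via `φ` and `ψ`. -/
def IsAFBicomodule (Δ : H →ₗ[K] H ⊗[K] H)
    (φ : V →ₗ[K] H ⊗[K] V) (ψ : V →ₗ[K] V ⊗[K] H) : Prop :=
  (∀ v, rTensor V Δ (φ v) - α K H H V (lTensor H φ (φ v))
      = τ₁₃ K V H H (rTensor H ψ (ψ v) - α K V H H (lTensor V Δ (ψ v)))) ∧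
  (∀ v, rTensor H φ (ψ v) - α K H V H (lTensor H ψ (φ v))
      = τ₁₃ K H V H (rTensor H φ (ψ v) - α K H V H (lTensor H ψ (φ v))))

/-- Anti-flexible Hopf bimodule over `(H, m, Δ)`, with conditions (HM1)-(HM3). -/
def IsAFHopfBimodule (m : H →ₗ[K] H →ₗ[K] H) (Δ : H →ₗ[K] H ⊗[K] H)
    (tr : H →ₗ[K] V →ₗ[K] V) (tl : V →ₗ[K] H →ₗ[K] V)
    (φ : V →ₗ[K] H ⊗[K] V) (ψ : V →ₗ[K] V ⊗[K] H) : Prop :=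
  IsAFBimodule m tr tl ∧ IsAFBicomodule Δ φ ψ ∧
  -- (HM1)
  (∀ x v, φ (tr x v) + τ K V H (ψ (tl v x))
      = lTensor H (tr x) (φ v) + lTensor H (tl.flip x) (τ K V H (ψ v))) ∧
  -- (HM2)
  (∀ x v, ψ (tr x v) + τ K H V (φ (tl v x))
      = rTensor H (tr.flip v) (Δ x) + lTensor V (m x) (ψ v)
      + lTensor V (m.flip x) (τ K H V (φ v)) + rTensor H (tl v) (τ K H H (Δ x))) ∧
  -- (HM3)
  (∀ x v, rTensor H (tr x) (ψ v) - rTensor H (tl v) (Δ x) - lTensor V (m.flip x) (ψ v)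
      = τ K H V (- lTensor H (tl.flip x) (φ v) + rTensor V (m x) (φ v)
        + lTensor H (tr.flip v) (Δ x)))

/-- `A` is a braided anti-flexible bialgebra over `(H, mH, ΔH)`:
an anti-flexible algebra and coalgebra in the category of anti-flexible Hopf bimodules,
satisfying (BB1) and (BB2). -/
def IsBraidedAFBialgebra (mA : A →ₗ[K] A →ₗ[K] A) (ΔA : A →ₗ[K] A ⊗[K] A)
    (mH : H →ₗ[K] H →ₗ[K] H) (ΔH : H →ₗ[K] H ⊗[K] H)
    (tr : H →ₗ[K] A →ₗ[K] A) (tl : A →ₗ[K] H →ₗ[K] A)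
    (φ : A →ₗ[K] H ⊗[K] A) (ψ : A →ₗ[K] A ⊗[K] H) : Prop :=
  IsAFAlgebra mA ∧ IsAFCoalgebra ΔA ∧
  IsAFHopfBimodule mH ΔH tr tl φ ψ ∧
  -- H-bimodule algebra
  (∀ x a b, mA (tr x a) b - tr x (mA a b) = tl (mA b a) x - mA b (tl a x)) ∧
  (∀ x a b, mA a (tr x b) - mA (tl a x) b = mA b (tr x a) - mA (tl b x) a) ∧
  -- H-bimodule coalgebra
  (∀ x b, ΔA (tr x b) + τ K A A (ΔA (tl b x))
      = lTensor A (tl.flip x) (τ K A A (ΔA b)) + lTensor A (tr x) (ΔA b)) ∧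
  (∀ x b, ω K A (rTensor A (tr x) (ΔA b) - lTensor A (tl.flip x) (ΔA b)) = 0) ∧
  -- H-bicomodule algebra
  (∀ a b, φ (mA a b) + τ K A H (ψ (mA b a))
      = lTensor H (mA a) (φ b) + lTensor H (mA.flip a) (τ K A H (ψ b))) ∧
  (∀ a b, lTensor H (mA.flip b) (φ a) - lTensor H (mA.flip a) (φ b)
      = τ K A H (rTensor H (mA a) (ψ b) - rTensor H (mA b) (ψ a))) ∧
  -- H-bicomodule coalgebra
  (∀ a, rTensor A φ (ΔA a) - α K H A A (lTensor H ΔA (φ a))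
      = τ₁₃ K A A H (rTensor H ΔA (ψ a) - α K A A H (lTensor A ψ (ΔA a)))) ∧
  (∀ a, rTensor A ψ (ΔA a) - α K A H A (lTensor A φ (ΔA a))
      = τ₁₃ K A H A (rTensor A ψ (ΔA a) - α K A H A (lTensor A φ (ΔA a)))) ∧
  -- (BB1)
  (∀ a b, ΔA (mA a b) + τ K A A (ΔA (mA b a))
      = rTensor A (mA.flip b) (ΔA a) + rTensor A (mA b) (τ K A A (ΔA a))
      + lTensor A (mA a) (ΔA b) + lTensor A (mA.flip a) (τ K A A (ΔA b))
      + rTensor A (tr.flip b) (φ a) + rTensor A (tl b) (τ K A H (ψ a))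
      + lTensor A (tl a) (ψ b) + lTensor A (tr.flip a) (τ K H A (φ b))) ∧
  -- (BB2)
  (∀ a b, ω K A (lTensor A (mA.flip b) (ΔA a) - rTensor A (mA b) (ΔA a)
        - lTensor A (mA.flip a) (ΔA b) + rTensor A (mA a) (ΔA b))
      + ω K A (lTensor A (tr.flip b) (ψ a) - rTensor A (tl b) (φ a)
        - lTensor A (tr.flip a) (ψ b) + rTensor A (tl a) (φ b)) = 0)

/-- The (cocycle) cross product multiplication on `A × H`:
`(a,x)(b,y) = (ab + x⇀b + a↼y + σ(x,y), xy + x◁b + a▷y + θ(a,b))`,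
where `tr = ⇀`, `tl = ↼`, `sr = ▷`, `sl = ◁`. -/
noncomputable def prodMul (mA : A →ₗ[K] A →ₗ[K] A) (mH : H →ₗ[K] H →ₗ[K] H)
    (tr : H →ₗ[K] A →ₗ[K] A) (tl : A →ₗ[K] H →ₗ[K] A)
    (sr : A →ₗ[K] H →ₗ[K] H) (sl : H →ₗ[K] A →ₗ[K] H)
    (σ : H →ₗ[K] H →ₗ[K] A) (θ : A →ₗ[K] A →ₗ[K] H) :
    (A × H) →ₗ[K] (A × H) →ₗ[K] (A × H) :=
  ((mA ∘ₗ fst K A H).compl₂ (fst K A H) + (tr ∘ₗ snd K A H).compl₂ (fst K A H)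
    + (tl ∘ₗ fst K A H).compl₂ (snd K A H)
    + (σ ∘ₗ snd K A H).compl₂ (snd K A H)).compr₂ (inl K A H)
  + ((mH ∘ₗ snd K A H).compl₂ (snd K A H) + (sl ∘ₗ snd K A H).compl₂ (fst K A H)
    + (sr ∘ₗ fst K A H).compl₂ (snd K A H)
    + (θ ∘ₗ fst K A H).compl₂ (fst K A H)).compr₂ (inr K A H)

/-- The (cycle) cross coproduct comultiplication on `A × H`:
`Δ(a) = Δ_A(a) + φ(a) + ψ(a) + P(a)` and `Δ(x) = Δ_H(x) + ρ(x) + γ(x) + Q(x)`. -/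
noncomputable def prodComul (ΔA : A →ₗ[K] A ⊗[K] A) (ΔH : H →ₗ[K] H ⊗[K] H)
    (φ : A →ₗ[K] H ⊗[K] A) (ψ : A →ₗ[K] A ⊗[K] H)
    (ρ : H →ₗ[K] A ⊗[K] H) (γ : H →ₗ[K] H ⊗[K] A)
    (P : A →ₗ[K] H ⊗[K] H) (Q : H →ₗ[K] A ⊗[K] A) :
    (A × H) →ₗ[K] (A × H) ⊗[K] (A × H) :=
  (TensorProduct.map (inl K A H) (inl K A H)) ∘ₗ ΔA ∘ₗ fst K A H
  + (TensorProduct.map (inr K A H) (inl K A H)) ∘ₗ φ ∘ₗ fst K A H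
  + (TensorProduct.map (inl K A H) (inr K A H)) ∘ₗ ψ ∘ₗ fst K A H
  + (TensorProduct.map (inr K A H) (inr K A H)) ∘ₗ P ∘ₗ fst K A H
  + (TensorProduct.map (inr K A H) (inr K A H)) ∘ₗ ΔH ∘ₗ snd K A H
  + (TensorProduct.map (inl K A H) (inr K A H)) ∘ₗ ρ ∘ₗ snd K A H
  + (TensorProduct.map (inr K A H) (inl K A H)) ∘ₗ γ ∘ₗ snd K A H
  + (TensorProduct.map (inl K A H) (inl K A H)) ∘ₗ Q ∘ₗ snd K A H

/-- The linear map `(a, x) ↦ (a + r(x), s(x))` on `A × V`. -/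
noncomputable def phiRS (r : V →ₗ[K] A) (s : V →ₗ[K] V) : (A × V) →ₗ[K] (A × V) :=
  (fst K A V + r ∘ₗ snd K A V).prod (s ∘ₗ snd K A V)

end Structures

end AntiFlexible

open AntiFlexible

section AuxRestrict

variable {K M N E : Type*} [Field K] [AddCommGroup M] [Module K M]
  [AddCommGroup N] [Module K N] [AddCommGroup E] [Module K E]

/-- Restrict a bilinear map whose image lies in a submodule. -/
noncomputable def bilRestrict (S : Submodule K E) (B : M →ₗ[K] N →ₗ[K] E)
    (h : ∀ m n, B m n ∈ S) : M →ₗ[K] N →ₗ[K] ↥S :=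
  LinearMap.mk₂ K (fun m n => ⟨B m n, h m n⟩)
    (fun m m' n => Subtype.ext (by simp))
    (fun c m n => Subtype.ext (by simp))
    (fun m n n' => Subtype.ext (by simp))
    (fun c m n => Subtype.ext (by simp))

@[simp] lemma bilRestrict_coe (S : Submodule K E) (B : M →ₗ[K] N →ₗ[K] E)
    (h : ∀ m n, B m n ∈ S) (m : M) (n : N) :
    (bilRestrict S B h m n : E) = B m n := rfl

end AuxRestrict

/-- if `E` is an anti-flexible algebra containing the anti-flexible
algebra `A` as a subspace, `p : E → A` is a linear projection which is an algebra
homomorphism, and `V = ker p` is a subalgebra of `E`, then the maps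
`x ◁ a = x·(ιa)`, `a ▷ x = (ιa)·x`, `θ(a,b) = (ιa)·(ιb) - ι(p((ιa)·(ιb)))`,
`x ·_V y = x·y` form a type (a1) extending datum (so (A1)-(A6) hold), and
`(a,x) ↦ ιa + x` is an isomorphism of anti-flexible algebras `A #_θ V ≅ E`. -/
theorem extending_a1_realisation
    (K A E : Type*) [Field K] [CharZero K]
    [AddCommGroup A] [Module K A] [AddCommGroup E] [Module K E]
    (mA : A →ₗ[K] A →ₗ[K] A) (mE : E →ₗ[K] E →ₗ[K] E)
    (ι : A →ₗ[K] E) (p : E →ₗ[K] A)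
    (hA : IsAFAlgebra mA) (hE : IsAFAlgebra mE)
    (hι : Function.Injective ι) (hpι : ∀ a : A, p (ι a) = a)
    (hVsub : ∀ x y : E, p x = 0 → p y = 0 → p (mE x y) = 0)
    (hphom : ∀ x y : E, p (mE x y) = mA (p x) (p y)) :
    ∃ (sl : ↥(LinearMap.ker p) →ₗ[K] A →ₗ[K] ↥(LinearMap.ker p))
      (sr : A →ₗ[K] ↥(LinearMap.ker p) →ₗ[K] ↥(LinearMap.ker p))
      (θ : A →ₗ[K] A →ₗ[K] ↥(LinearMap.ker p))
      (mV : ↥(LinearMap.ker p) →ₗ[K] ↥(LinearMap.ker p) →ₗ[K] ↥(LinearMap.ker p)),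
      -- the defining formulas of the extending datum
      (∀ (x : ↥(LinearMap.ker p)) (a : A), (sl x a : E) = mE x (ι a)) ∧
      (∀ (a : A) (x : ↥(LinearMap.ker p)), (sr a x : E) = mE (ι a) x) ∧
      (∀ a b : A, (θ a b : E) = mE (ι a) (ι b) - ι (p (mE (ι a) (ι b)))) ∧
      (∀ x y : ↥(LinearMap.ker p), (mV x y : E) = mE x y) ∧
      -- it is a type (a1) extending datum, i.e. the unified product is anti-flexible
      IsAFAlgebra (prodMul mA mV 0 0 sr sl 0 θ) ∧
      -- conditions (A1)-(A6)
      (∀ (x y : ↥(LinearMap.ker p)) (a : A),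
        sl (mV x y) a + sr a (mV y x) = mV x (sl y a) + mV (sr a y) x) ∧
      (∀ (x y : ↥(LinearMap.ker p)) (a : A),
        mV (sl x a) y - mV x (sr a y) = mV (sl y a) x - mV y (sr a x)) ∧
      (∀ (a b : A) (x : ↥(LinearMap.ker p)),
        sr (mA a b) x + mV (θ a b) x - sr a (sr b x)
          = sl (sl x b) a - mV x (θ b a) - sl x (mA b a)) ∧
      (∀ (a b : A) (x : ↥(LinearMap.ker p)),
        sl (sr a x) b - sr a (sl x b) = sl (sr b x) a - sr b (sl x a)) ∧
      (∀ a b c : A,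
        θ (mA a b) c - θ a (mA b c) + sl (θ a b) c - sr a (θ b c)
          = θ (mA c b) a - θ c (mA b a) + sl (θ c b) a - sr c (θ b a)) ∧
      (∀ x y z : ↥(LinearMap.ker p),
        mV (mV x y) z - mV x (mV y z) = mV (mV z y) x - mV z (mV y x)) ∧
      -- `(a,x) ↦ ι a + x` is an algebra isomorphism `A #_θ V ≅ E`
      (∀ q q' : A × ↥(LinearMap.ker p),
        ι ((prodMul mA mV 0 0 sr sl 0 θ) q q').1
          + (((prodMul mA mV 0 0 sr sl 0 θ) q q').2 : E)
          = mE (ι q.1 + (q.2 : E)) (ι q'.1 + (q'.2 : E))) ∧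
      Function.Bijective (fun q : A × ↥(LinearMap.ker p) => ι q.1 + (q.2 : E)) := by
  classical
  have hker : ∀ x : ↥(LinearMap.ker p), p (x : E) = 0 := fun x => x.2
  have hslm : ∀ (x : ↥(LinearMap.ker p)) (a : A),
      ((mE ∘ₗ (LinearMap.ker p).subtype).compl₂ ι) x a ∈ LinearMap.ker p := by
    intro x a
    simp [LinearMap.mem_ker, hphom, hker x]
  have hsrm : ∀ (a : A) (x : ↥(LinearMap.ker p)),
      ((mE ∘ₗ ι).compl₂ (LinearMap.ker p).subtype) a x ∈ LinearMap.ker p := by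
    intro a x
    simp [LinearMap.mem_ker, hphom, hker x]
  have hθm : ∀ a b : A,
      (((mE ∘ₗ ι).compl₂ ι).compr₂ (LinearMap.id - ι ∘ₗ p)) a b ∈ LinearMap.ker p := by
    intro a b
    simp [LinearMap.mem_ker, hpι]
  have hmVm : ∀ x y : ↥(LinearMap.ker p),
      ((mE ∘ₗ (LinearMap.ker p).subtype).compl₂ (LinearMap.ker p).subtype) x y
        ∈ LinearMap.ker p := by
    intro x y
    exact LinearMap.mem_ker.mpr (hVsub _ _ (hker x) (hker y))
  set sl := bilRestrict _ _ hslm with hsl_def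
  set sr := bilRestrict _ _ hsrm with hsr_def
  set θ' := bilRestrict _ _ hθm with hθ_def
  set mV := bilRestrict _ _ hmVm with hmV_def
  have hcsl : ∀ (x : ↥(LinearMap.ker p)) (a : A), (sl x a : E) = mE x (ι a) := fun _ _ => rfl
  have hcsr : ∀ (a : A) (x : ↥(LinearMap.ker p)), (sr a x : E) = mE (ι a) x := fun _ _ => rfl
  have hcθ0 : ∀ a b : A, (θ' a b : E) = mE (ι a) (ι b) - ι (p (mE (ι a) (ι b))) :=
    fun _ _ => rfl
  have hcmV : ∀ x y : ↥(LinearMap.ker p), (mV x y : E) = mE x y := fun _ _ => rfl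
  have hcθ : ∀ a b : A, (θ' a b : E) = mE (ι a) (ι b) - ι (mA a b) := by
    intro a b
    rw [hcθ0, hphom, hpι, hpι]
  -- evaluation of the product
  have hprodEval : ∀ q q' : A × ↥(LinearMap.ker p),
      (prodMul mA mV 0 0 sr sl 0 θ') q q'
        = (mA q.1 q'.1, mV q.2 q'.2 + sl q.2 q'.1 + sr q.1 q'.2 + θ' q.1 q'.1) := by
    intro q q'
    simp [prodMul, Prod.ext_iff]
  -- multiplicativity of the map
  have hmul : ∀ q q' : A × ↥(LinearMap.ker p),
      ι ((prodMul mA mV 0 0 sr sl 0 θ') q q').1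
          + (((prodMul mA mV 0 0 sr sl 0 θ') q q').2 : E)
        = mE (ι q.1 + (q.2 : E)) (ι q'.1 + (q'.2 : E)) := by
    intro q q'
    rw [hprodEval]
    push_cast [hcmV, hcsl, hcsr, hcθ]
    simp only [Submodule.coe_add, hcmV, hcsl, hcsr, hcθ, map_add, LinearMap.add_apply]
    abel
  -- injectivity of the map
  have hinj : Function.Injective
      (fun q : A × ↥(LinearMap.ker p) => ι q.1 + (q.2 : E)) := by
    intro q r h
    simp only at h
    have h1 : q.1 = r.1 := by
      have := congrArg p h
      simpa [hpι, hker] using this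
    have h2 : (q.2 : E) = (r.2 : E) := by
      rw [h1] at h
      exact add_left_cancel h
    exact Prod.ext h1 (Subtype.ext h2)
  refine ⟨sl, sr, θ', mV, hcsl, hcsr, hcθ0, hcmV, ?_, ?_, ?_, ?_, ?_, ?_, ?_, hmul, ?_⟩
  · -- IsAFAlgebra of the unified product
    intro q r s
    apply hinj
    have fsub : ∀ u v : A × ↥(LinearMap.ker p),
        ι (u - v).1 + ((u - v).2 : E) = (ι u.1 + (u.2 : E)) - (ι v.1 + (v.2 : E)) := by
      intro u v
      simp only [Prod.fst_sub, Prod.snd_sub, map_sub, Submodule.coe_sub]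
      abel
    simp only
    rw [fsub, fsub, hmul, hmul, hmul, hmul, hmul, hmul, hmul, hmul]
    exact hE _ _ _
  · -- (A1)
    intro x y a
    apply Subtype.ext
    push_cast [hcmV, hcsl, hcsr]
    have h := hE (x : E) (y : E) (ι a)
    linear_combination (norm := abel) h
  · -- (A2)
    intro x y a
    apply Subtype.ext
    push_cast [hcmV, hcsl, hcsr]
    have h := hE (x : E) (ι a) (y : E)
    linear_combination (norm := abel) h
  · -- (A3)
    intro a b x
    apply Subtype.ext
    push_cast [hcmV, hcsl, hcsr, hcθ]
    simp only [map_sub, LinearMap.sub_apply]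
    have h := hE (ι a) (ι b) (x : E)
    linear_combination (norm := abel) h
  · -- (A4)
    intro a b x
    apply Subtype.ext
    push_cast [hcsl, hcsr]
    have h := hE (ι a) (x : E) (ι b)
    linear_combination (norm := abel) h
  · -- (A5)
    intro a b c
    apply Subtype.ext
    push_cast [hcθ, hcsl, hcsr]
    simp only [hcθ, map_sub, LinearMap.sub_apply]
    have h := hE (ι a) (ι b) (ι c)
    have h2 : ι (mA (mA a b) c) - ι (mA a (mA b c))
        = ι (mA (mA c b) a) - ι (mA c (mA b a)) := by
      rw [← map_sub, ← map_sub, hA]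
    linear_combination (norm := abel) h - h2
  · -- (A6)
    intro x y z
    apply Subtype.ext
    push_cast [hcmV]
    exact hE _ _ _
  · -- bijectivity
    refine ⟨hinj, ?_⟩
    intro e
    refine ⟨(p e, ⟨e - ι (p e), ?_⟩), ?_⟩
    · simp [LinearMap.mem_ker, hpι]
    · simp
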